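/- Let z_1,...,z_n be distinct elements of a field and 0 ≤ k ≤ n. Define vectors Z_A = Σ_{|B|=k} s_{λ(A)}(z_B) V_B for subsets A with |A| = k, where (V_B)_{|B|=k} is a basis of a vector space. Then the inverse change of basis is V_B = (∏_{i∈B, j∉B}(z_i − z_j))^{−1} · Σ_{|C|=k} ε(w_{C̄}) s_{λ(C̄)}(z_{B̄}) Z_C. -/
import Mathlib
open Finset

noncomputable def shufflePerm {n : ℕ} (B : Finset (Fin n)) : Equiv.Perm (Fin n) :=
  (finCongr (((Finset.card_add_card_compl B).trans (Fintype.card_fin n)).symm)).trans <|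
  (finSumFinEquiv.symm).trans <|
  (Equiv.sumCongr (B.orderIsoOfFin rfl).toEquiv (Bᶜ.orderIsoOfFin rfl).toEquiv).trans <|
  (Equiv.sumCongr (Equiv.refl _) (Equiv.subtypeEquivRight (fun _ => Finset.mem_compl))).trans <|
  (Equiv.sumCompl (· ∈ B))

lemma card_compl_eq {n k m : ℕ} (h : k + m = n) {C : Finset (Fin n)} (hC : C.card = k) :
    Cᶜ.card = m := by
  have := Finset.card_add_card_compl C
  rw [Fintype.card_fin] at this; omega

lemma shufflePerm_apply_castAdd {n k m : ℕ} (h : k + m = n) (C : Finset (Fin n))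
    (hC : C.card = k) (j : Fin k) :
    shufflePerm C (Fin.cast h (Fin.castAdd m j)) = C.orderEmbOfFin hC j := by
  subst hC
  obtain rfl : m = Cᶜ.card := by have := card_compl_eq h rfl; omega
  have e1 : (finCongr (((Finset.card_add_card_compl C).trans (Fintype.card_fin n)).symm))
      (Fin.cast h (Fin.castAdd Cᶜ.card j)) = Fin.castAdd Cᶜ.card j := by
    apply Fin.ext; simp
  rw [shufflePerm]
  simp only [Equiv.trans_apply, e1, finSumFinEquiv_symm_apply_castAdd,
    Equiv.sumCongr_apply, Sum.map_inl, Equiv.coe_refl, id_eq, Equiv.sumCompl_apply_inl]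
  rw [← Finset.coe_orderIsoOfFin_apply]
  rfl

lemma shufflePerm_apply_natAdd {n k m : ℕ} (h : k + m = n) (C : Finset (Fin n))
    (hC : C.card = k) (j : Fin m) :
    shufflePerm C (Fin.cast h (Fin.natAdd k j)) = Cᶜ.orderEmbOfFin (card_compl_eq h hC) j := by
  subst hC
  obtain rfl : m = Cᶜ.card := by have := card_compl_eq h rfl; omega
  have e1 : (finCongr (((Finset.card_add_card_compl C).trans (Fintype.card_fin n)).symm))
      (Fin.cast h (Fin.natAdd C.card j)) = Fin.natAdd C.card j := by
    apply Fin.ext; simp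
  rw [shufflePerm]
  simp only [Equiv.trans_apply, e1, finSumFinEquiv_symm_apply_natAdd,
    Equiv.sumCongr_apply, Sum.map_inr, Equiv.sumCompl_apply_inr]
  rw [← Finset.coe_orderIsoOfFin_apply]
  rfl
open Finset Equiv

def blockEquiv {n k m : ℕ} (h : k + m = n) : Fin n ≃ (Fin k ⊕ Fin m) :=
  (finCongr h.symm).trans finSumFinEquiv.symm

lemma blockEquiv_symm_inl {n k m : ℕ} (h : k + m = n) (i : Fin k) :
    (blockEquiv h).symm (Sum.inl i) = Fin.cast h (Fin.castAdd m i) := by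
  simp [blockEquiv]

lemma blockEquiv_symm_inr {n k m : ℕ} (h : k + m = n) (i : Fin m) :
    (blockEquiv h).symm (Sum.inr i) = Fin.cast h (Fin.natAdd k i) := by
  simp [blockEquiv]

lemma blockEquiv_castAdd {n k m : ℕ} (h : k + m = n) (i : Fin k) :
    (blockEquiv h) (Fin.cast h (Fin.castAdd m i)) = Sum.inl i := by
  rw [← blockEquiv_symm_inl h i, Equiv.apply_symm_apply]

lemma blockEquiv_natAdd {n k m : ℕ} (h : k + m = n) (i : Fin m) :
    (blockEquiv h) (Fin.cast h (Fin.natAdd k i)) = Sum.inr i := by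
  rw [← blockEquiv_symm_inr h i, Equiv.apply_symm_apply]

noncomputable def shufProd {n k m : ℕ} (h : k + m = n)
    (x : {C : Finset (Fin n) // C.card = k} × Equiv.Perm (Fin k) × Equiv.Perm (Fin m)) :
    Equiv.Perm (Fin n) :=
  (((blockEquiv h).symm.permCongr (Equiv.sumCongr x.2.1 x.2.2))).trans (shufflePerm x.1.1)

lemma shufProd_apply_castAdd {n k m : ℕ} (h : k + m = n)
    (x : {C : Finset (Fin n) // C.card = k} × Equiv.Perm (Fin k) × Equiv.Perm (Fin m))
    (i : Fin k) :
    shufProd h x (Fin.cast h (Fin.castAdd m i)) = x.1.1.orderEmbOfFin x.1.2 (x.2.1 i) := by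
  rw [shufProd, Equiv.trans_apply, Equiv.permCongr_apply, Equiv.symm_symm,
    blockEquiv_castAdd, Equiv.sumCongr_apply, Sum.map_inl, blockEquiv_symm_inl,
    shufflePerm_apply_castAdd h]

lemma shufProd_apply_natAdd {n k m : ℕ} (h : k + m = n)
    (x : {C : Finset (Fin n) // C.card = k} × Equiv.Perm (Fin k) × Equiv.Perm (Fin m))
    (i : Fin m) :
    shufProd h x (Fin.cast h (Fin.natAdd k i)) =
      (x.1.1ᶜ).orderEmbOfFin (card_compl_eq h x.1.2) (x.2.2 i) := by
  rw [shufProd, Equiv.trans_apply, Equiv.permCongr_apply, Equiv.symm_symm,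
    blockEquiv_natAdd, Equiv.sumCongr_apply, Sum.map_inr, blockEquiv_symm_inr,
    shufflePerm_apply_natAdd h x.1.1 x.1.2]

lemma shufProd_bijective {n k m : ℕ} (h : k + m = n) :
    Function.Bijective (shufProd h) := by
  rw [Fintype.bijective_iff_injective_and_card]
  constructor
  · rintro ⟨⟨C, hC⟩, σ₁, σ₂⟩ ⟨⟨C', hC'⟩, σ₁', σ₂'⟩ hxy
    have key : ∀ i : Fin k, C.orderEmbOfFin hC (σ₁ i) = C'.orderEmbOfFin hC' (σ₁' i) := by
      intro i
      rw [← shufProd_apply_castAdd h ⟨⟨C, hC⟩, σ₁, σ₂⟩ i,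
        ← shufProd_apply_castAdd h ⟨⟨C', hC'⟩, σ₁', σ₂'⟩ i, hxy]
    have key2 : ∀ i : Fin m, (Cᶜ).orderEmbOfFin (card_compl_eq h hC) (σ₂ i)
        = (C'ᶜ).orderEmbOfFin (card_compl_eq h hC') (σ₂' i) := by
      intro i
      rw [← shufProd_apply_natAdd h ⟨⟨C, hC⟩, σ₁, σ₂⟩ i,
        ← shufProd_apply_natAdd h ⟨⟨C', hC'⟩, σ₁', σ₂'⟩ i, hxy]
    have hCC : C = C' := by
      apply Finset.eq_of_subset_of_card_le _ (by omega)
      intro a ha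
      have : a ∈ Set.range (C.orderEmbOfFin hC) := by
        rw [Finset.range_orderEmbOfFin]; exact_mod_cast ha
      obtain ⟨j, rfl⟩ := this
      rw [← Equiv.apply_symm_apply σ₁ j, key (σ₁.symm j)]
      exact Finset.orderEmbOfFin_mem _ _ _
    subst hCC
    refine Prod.ext (Subtype.ext rfl) (Prod.ext ?_ ?_)
    · exact Equiv.ext fun i => (C.orderEmbOfFin hC).injective (key i)
    · exact Equiv.ext fun i => ((Cᶜ).orderEmbOfFin (card_compl_eq h hC)).injective (key2 i)
  · simp only [Fintype.card_prod, Fintype.card_finset_len, Fintype.card_perm, Fintype.card_fin]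
    rw [← Nat.choose_mul_factorial_mul_factorial (show k ≤ n by omega)]
    have hm : n - k = m := by omega
    rw [hm]; ring

theorem laplace {R : Type*} [CommRing R] {n k m : ℕ} (h : k + m = n)
    (M : Matrix (Fin n) (Fin n) R) :
    M.det = ∑ C : {C : Finset (Fin n) // C.card = k},
      ((Equiv.Perm.sign (shufflePerm C.1) : ℤ) : R)
      * (Matrix.det (Matrix.of fun i j : Fin k =>
          M (C.1.orderEmbOfFin C.2 i) (Fin.cast h (Fin.castAdd m j))))
      * (Matrix.det (Matrix.of fun i j : Fin m =>
          M ((C.1ᶜ).orderEmbOfFin (card_compl_eq h C.2) i) (Fin.cast h (Fin.natAdd k j)))) := by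
  rw [Matrix.det_apply']
  have hb := Fintype.sum_bijective (shufProd h) (shufProd_bijective h)
      (fun x => ((Equiv.Perm.sign (shufProd h x) : ℤ) : R) * ∏ i, M (shufProd h x i) i)
      (fun σ => ((Equiv.Perm.sign σ : ℤ) : R) * ∏ i, M (σ i) i) (fun x => rfl)
  rw [← hb, Fintype.sum_prod_type]
  refine Fintype.sum_congr _ _ fun C => ?_
  rw [Matrix.det_apply', Matrix.det_apply', Fintype.sum_prod_type]
  simp only [Finset.mul_sum, Finset.sum_mul]
  conv_rhs => rw [Finset.sum_comm]
  refine Fintype.sum_congr _ _ fun σ₁ => ?_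
  refine Fintype.sum_congr _ _ fun σ₂ => ?_
  have hsign : Equiv.Perm.sign (shufProd h (C, σ₁, σ₂)) =
      Equiv.Perm.sign (shufflePerm C.1) * (Equiv.Perm.sign σ₁ * Equiv.Perm.sign σ₂) := by
    have : shufProd h (C, σ₁, σ₂) =
        shufflePerm C.1 * ((blockEquiv h).symm.permCongr (Equiv.sumCongr σ₁ σ₂)) := rfl
    rw [this, map_mul, Equiv.Perm.sign_permCongr, Equiv.Perm.sign_sumCongr]
  have hprod : (∏ i, M (shufProd h (C, σ₁, σ₂) i) i) =
      (∏ i : Fin k, M (C.1.orderEmbOfFin C.2 (σ₁ i)) (Fin.cast h (Fin.castAdd m i))) *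
      ∏ i : Fin m, M ((C.1ᶜ).orderEmbOfFin (card_compl_eq h C.2) (σ₂ i))
        (Fin.cast h (Fin.natAdd k i)) := by
    rw [← Equiv.prod_comp (blockEquiv h).symm (fun i => M (shufProd h (C, σ₁, σ₂) i) i),
      Fintype.prod_sum_type]
    congr 1
    · exact Finset.prod_congr rfl fun i _ => by
        rw [blockEquiv_symm_inl, shufProd_apply_castAdd]
    · exact Finset.prod_congr rfl fun i _ => by
        rw [blockEquiv_symm_inr, shufProd_apply_natAdd]
  rw [hsign, hprod]
  push_cast [Units.val_mul]
  simp only [Matrix.of_apply]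
  ring

lemma prod_Ioi_ite {F : Type*} [CommMonoid F] {N : ℕ} (i : Fin N) (f : Fin N → F) :
    ∏ j ∈ Finset.Ioi i, f j = ∏ j : Fin N, if i < j then f j else 1 := by
  rw [← Finset.prod_filter]
  congr 1
  ext j
  simp

lemma prod_Ioi_split {F : Type*} [CommRing F] {m k n : ℕ} (h' : m + k = n) (y : Fin n → F) :
    (∏ i : Fin n, ∏ j ∈ Finset.Ioi i, (y j - y i)) =
    ((∏ a : Fin m, ∏ c ∈ Finset.Ioi a, (y (Fin.cast h' (Fin.castAdd k c)) - y (Fin.cast h' (Fin.castAdd k a)))) *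
     (∏ b : Fin k, ∏ d ∈ Finset.Ioi b, (y (Fin.cast h' (Fin.natAdd m d)) - y (Fin.cast h' (Fin.natAdd m b))))) *
    ∏ d : Fin k, ∏ a : Fin m, (y (Fin.cast h' (Fin.natAdd m d)) - y (Fin.cast h' (Fin.castAdd k a))) := by
  subst h'
  simp only [Fin.cast_refl, id_eq]
  have inner1 : ∀ a : Fin m, (∏ j ∈ Finset.Ioi (Fin.castAdd k a), (y j - y (Fin.castAdd k a)))
      = (∏ c ∈ Finset.Ioi a, (y (Fin.castAdd k c) - y (Fin.castAdd k a))) *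
        ∏ d : Fin k, (y (Fin.natAdd m d) - y (Fin.castAdd k a)) := by
    intro a
    rw [prod_Ioi_ite, Fin.prod_univ_add]
    congr 1
    · rw [prod_Ioi_ite]
      exact Finset.prod_congr rfl fun c _ => if_congr
        (by simp only [Fin.lt_def, Fin.coe_castAdd]) rfl rfl
    · exact Finset.prod_congr rfl fun d _ => if_pos
        (by simp only [Fin.lt_def, Fin.coe_castAdd, Fin.coe_natAdd]
            have := a.isLt; omega)
  have inner2 : ∀ b : Fin k, (∏ j ∈ Finset.Ioi (Fin.natAdd m b), (y j - y (Fin.natAdd m b)))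
      = ∏ d ∈ Finset.Ioi b, (y (Fin.natAdd m d) - y (Fin.natAdd m b)) := by
    intro b
    rw [prod_Ioi_ite, Fin.prod_univ_add]
    have h1 : (∏ c : Fin m, if Fin.natAdd m b < Fin.castAdd k c
        then (y (Fin.castAdd k c) - y (Fin.natAdd m b)) else 1) = 1 :=
      Finset.prod_eq_one fun c _ => if_neg
        (by simp only [Fin.lt_def, Fin.coe_castAdd, Fin.coe_natAdd]
            have := c.isLt; omega)
    rw [h1, one_mul, prod_Ioi_ite]
    exact Finset.prod_congr rfl fun d _ => if_congr
      (by simp only [Fin.lt_def, Fin.coe_natAdd]; omega) rfl rfl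
  rw [Fin.prod_univ_add]
  simp only [inner1, inner2]
  rw [Finset.prod_mul_distrib]
  have hc : (∏ a : Fin m, ∏ d : Fin k, (y (Fin.natAdd m d) - y (Fin.castAdd k a)))
      = ∏ d : Fin k, ∏ a : Fin m, (y (Fin.natAdd m d) - y (Fin.castAdd k a)) :=
    Finset.prod_comm
  rw [hc]
  ring

lemma orderEmbOfFin_cast {α : Type*} [LinearOrder α] (s : Finset α) {p q : ℕ}
    (h₁ : s.card = p) (h₂ : s.card = q) (i : Fin p) :
    s.orderEmbOfFin h₁ i = s.orderEmbOfFin h₂ (Fin.cast (h₁.symm.trans h₂) i) := by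
  subst h₁; subst h₂; rfl

lemma orderEmbOfFin_congr {α : Type*} [LinearOrder α] {S T : Finset α} (hST : S = T) {p : ℕ}
    (hS : S.card = p) (hT : T.card = p) (i : Fin p) :
    S.orderEmbOfFin hS i = T.orderEmbOfFin hT i := by
  subst hST; rfl

lemma det_fin_cast {R : Type*} [CommRing R] {p q : ℕ} (hpq : p = q) (f : Fin q → Fin q → R) :
    Matrix.det (Matrix.of fun i j : Fin p => f (Fin.cast hpq i) (Fin.cast hpq j))
      = Matrix.det (Matrix.of f) := by
  subst hpq; rfl

lemma det_pow_matrix {F : Type*} [CommRing F] {p : ℕ} (w : Fin p → F) :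
    Matrix.det (Matrix.of fun i j : Fin p => w j ^ (i : ℕ))
      = ∏ i : Fin p, ∏ j ∈ Finset.Ioi i, (w j - w i) := by
  have e : (Matrix.of fun i j : Fin p => w j ^ (i : ℕ)) = (Matrix.vandermonde w).transpose := by
    ext i j
    simp [Matrix.vandermonde]
  rw [e, Matrix.det_transpose, Matrix.det_vandermonde]

lemma prodIoi_ne_zero {F : Type*} [Field F] {p : ℕ} (w : Fin p → F)
    (hw : Function.Injective w) :
    (∏ i : Fin p, ∏ j ∈ Finset.Ioi i, (w j - w i)) ≠ 0 := by
  rw [Finset.prod_ne_zero_iff]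
  intro i _
  rw [Finset.prod_ne_zero_iff]
  intro j hj
  rw [sub_ne_zero]
  exact fun e => absurd (hw e) (ne_of_gt (Finset.mem_Ioi.mp hj))

lemma prod_orderEmbOfFin {α : Type*} {F : Type*} [LinearOrder α] [CommMonoid F]
    (s : Finset α) {p : ℕ} (h : s.card = p) (f : α → F) :
    ∏ i : Fin p, f (s.orderEmbOfFin h i) = ∏ x ∈ s, f x := by
  rw [← Finset.prod_coe_sort s f]
  exact Equiv.prod_comp ((s.orderIsoOfFin h).toEquiv) (fun x : {x // x ∈ s} => f x)

noncomputable def schurAt {F : Type*} [Field F] {n : ℕ} (z : Fin n → F)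
    (D E : Finset (Fin n)) : F :=
  if h : E.card = D.card then
    Matrix.det (Matrix.of fun (i j : Fin D.card) =>
        z (E.orderEmbOfFin h j) ^ ((D.orderEmbOfFin rfl i : Fin n) : ℕ))
    / Matrix.det (Matrix.of fun (i j : Fin D.card) =>
        z (E.orderEmbOfFin h j) ^ (i : ℕ))
  else 0

lemma key {F : Type*} [Field F] {k m n : ℕ} (h : k + m = n) (z : Fin n → F)
    (hz : Function.Injective z) (B B' : Finset (Fin n)) (hB : B.card = k)
    (hB' : B'.card = k) :
    (∑ C ∈ Finset.powersetCard k (Finset.univ : Finset (Fin n)),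
      ((Equiv.Perm.sign (shufflePerm Cᶜ) : ℤ) : F) * schurAt z Cᶜ Bᶜ * schurAt z C B')
    = if B' = B then ∏ i ∈ B, ∏ j ∈ Bᶜ, (z i - z j) else 0 := by
  have h' : m + k = n := by omega
  have hBc : Bᶜ.card = m := card_compl_eq h hB
  let u : Fin m → F := fun a => z (Bᶜ.orderEmbOfFin hBc a)
  let w : Fin k → F := fun b => z (B'.orderEmbOfFin hB' b)
  let y : Fin n → F := fun x => Sum.elim u w (blockEquiv h' x)
  let M : Matrix (Fin n) (Fin n) F := Matrix.of (fun i j => y j ^ (i : ℕ))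
  have hycc : ∀ a : Fin m, y (Fin.cast h' (Fin.castAdd k a)) = u a := by
    intro a
    show Sum.elim u w (blockEquiv h' (Fin.cast h' (Fin.castAdd k a))) = u a
    rw [blockEquiv_castAdd]
    rfl
  have hynn : ∀ b : Fin k, y (Fin.cast h' (Fin.natAdd m b)) = w b := by
    intro b
    show Sum.elim u w (blockEquiv h' (Fin.cast h' (Fin.natAdd m b))) = w b
    rw [blockEquiv_natAdd]
    rfl
  have hu_inj : Function.Injective u :=
    fun a b hab => (Bᶜ.orderEmbOfFin hBc).injective (hz hab)
  have hw_inj : Function.Injective w :=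
    fun a b hab => (B'.orderEmbOfFin hB').injective (hz hab)
  have hPu0 : (∏ i : Fin m, ∏ j ∈ Finset.Ioi i, (u j - u i)) ≠ 0 := prodIoi_ne_zero u hu_inj
  have hPw0 : (∏ i : Fin k, ∏ j ∈ Finset.Ioi i, (w j - w i)) ≠ 0 := prodIoi_ne_zero w hw_inj
  rw [Finset.sum_subtype _ (fun C => Finset.mem_powersetCard_univ) _]
  have hterm : ∀ C : {C : Finset (Fin n) // C.card = k},
      ((Equiv.Perm.sign (shufflePerm (C.1)ᶜ) : ℤ) : F) * schurAt z (C.1)ᶜ Bᶜ * schurAt z C.1 B'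
      = ((∏ i : Fin m, ∏ j ∈ Finset.Ioi i, (u j - u i)) *
          (∏ i : Fin k, ∏ j ∈ Finset.Ioi i, (w j - w i)))⁻¹ *
        (((Equiv.Perm.sign (shufflePerm (C.1)ᶜ) : ℤ) : F)
        * Matrix.det (Matrix.of fun i j : Fin m =>
            M ((C.1ᶜ).orderEmbOfFin (card_compl_eq h C.2) i) (Fin.cast h' (Fin.castAdd k j)))
        * Matrix.det (Matrix.of fun i j : Fin k =>
            M (C.1.orderEmbOfFin C.2 i) (Fin.cast h' (Fin.natAdd m j)))) := by
    rintro ⟨C, hC⟩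
    have hCc : Cᶜ.card = m := card_compl_eq h hC
    have e1 : schurAt z C B' = Matrix.det (Matrix.of fun i j : Fin k =>
        M (C.orderEmbOfFin hC i) (Fin.cast h' (Fin.natAdd m j)))
        / (∏ i : Fin k, ∏ j ∈ Finset.Ioi i, (w j - w i)) := by
      rw [schurAt, dif_pos (hB'.trans hC.symm)]
      congr 1
      · have e : (fun (i j : Fin C.card) => z ((B'.orderEmbOfFin (hB'.trans hC.symm)) j)
              ^ ((C.orderEmbOfFin rfl i : Fin n) : ℕ))
            = fun i j => (fun (i' j' : Fin k) =>
                M (C.orderEmbOfFin hC i') (Fin.cast h' (Fin.natAdd m j')))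
                (Fin.cast hC i) (Fin.cast hC j) := by
          funext i j
          show _ = M (C.orderEmbOfFin hC (Fin.cast hC i)) (Fin.cast h' (Fin.natAdd m (Fin.cast hC j)))
          show _ = y (Fin.cast h' (Fin.natAdd m (Fin.cast hC j))) ^ ((C.orderEmbOfFin hC (Fin.cast hC i) : Fin n) : ℕ)
          rw [hynn, orderEmbOfFin_cast C rfl hC i, orderEmbOfFin_cast B' (hB'.trans hC.symm) hB' j]
        rw [show (Matrix.of fun (i j : Fin C.card) => z ((B'.orderEmbOfFin (hB'.trans hC.symm)) j)
              ^ ((C.orderEmbOfFin rfl i : Fin n) : ℕ)) = Matrix.of (fun i j =>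
                (fun (i' j' : Fin k) => M (C.orderEmbOfFin hC i') (Fin.cast h' (Fin.natAdd m j')))
                (Fin.cast hC i) (Fin.cast hC j)) from congrArg Matrix.of e]
        exact det_fin_cast hC
          (fun i' j' => M (C.orderEmbOfFin hC i') (Fin.cast h' (Fin.natAdd m j')))
      · have e : (fun (i j : Fin C.card) => z ((B'.orderEmbOfFin (hB'.trans hC.symm)) j) ^ (i : ℕ))
            = fun i j => (fun (i' j' : Fin k) => w j' ^ (i' : ℕ)) (Fin.cast hC i) (Fin.cast hC j) := by
          funext i j
          show _ = w (Fin.cast hC j) ^ ((Fin.cast hC i : Fin k) : ℕ)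
          rw [orderEmbOfFin_cast B' (hB'.trans hC.symm) hB' j]
          rfl
        rw [show (Matrix.of fun (i j : Fin C.card) =>
              z ((B'.orderEmbOfFin (hB'.trans hC.symm)) j) ^ (i : ℕ)) = Matrix.of (fun i j =>
                (fun (i' j' : Fin k) => w j' ^ (i' : ℕ)) (Fin.cast hC i) (Fin.cast hC j))
              from congrArg Matrix.of e]
        rw [det_fin_cast hC (fun i' j' => w j' ^ (i' : ℕ)), det_pow_matrix w]
    have e2 : schurAt z Cᶜ Bᶜ = Matrix.det (Matrix.of fun i j : Fin m =>
        M ((Cᶜ).orderEmbOfFin hCc i) (Fin.cast h' (Fin.castAdd k j)))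
        / (∏ i : Fin m, ∏ j ∈ Finset.Ioi i, (u j - u i)) := by
      rw [schurAt, dif_pos (hBc.trans hCc.symm)]
      congr 1
      · have e : (fun (i j : Fin Cᶜ.card) => z ((Bᶜ.orderEmbOfFin (hBc.trans hCc.symm)) j)
              ^ ((Cᶜ.orderEmbOfFin rfl i : Fin n) : ℕ))
            = fun i j => (fun (i' j' : Fin m) =>
                M ((Cᶜ).orderEmbOfFin hCc i') (Fin.cast h' (Fin.castAdd k j')))
                (Fin.cast hCc i) (Fin.cast hCc j) := by
          funext i j
          show _ = M ((Cᶜ).orderEmbOfFin hCc (Fin.cast hCc i)) (Fin.cast h' (Fin.castAdd k (Fin.cast hCc j)))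
          show _ = y (Fin.cast h' (Fin.castAdd k (Fin.cast hCc j))) ^ (((Cᶜ).orderEmbOfFin hCc (Fin.cast hCc i) : Fin n) : ℕ)
          rw [hycc, orderEmbOfFin_cast Cᶜ rfl hCc i, orderEmbOfFin_cast Bᶜ (hBc.trans hCc.symm) hBc j]
        rw [show (Matrix.of fun (i j : Fin Cᶜ.card) => z ((Bᶜ.orderEmbOfFin (hBc.trans hCc.symm)) j)
              ^ ((Cᶜ.orderEmbOfFin rfl i : Fin n) : ℕ)) = Matrix.of (fun i j =>
                (fun (i' j' : Fin m) => M ((Cᶜ).orderEmbOfFin hCc i') (Fin.cast h' (Fin.castAdd k j')))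
                (Fin.cast hCc i) (Fin.cast hCc j)) from congrArg Matrix.of e]
        exact det_fin_cast hCc
          (fun i' j' => M ((Cᶜ).orderEmbOfFin hCc i') (Fin.cast h' (Fin.castAdd k j')))
      · have e : (fun (i j : Fin Cᶜ.card) => z ((Bᶜ.orderEmbOfFin (hBc.trans hCc.symm)) j) ^ (i : ℕ))
            = fun i j => (fun (i' j' : Fin m) => u j' ^ (i' : ℕ)) (Fin.cast hCc i) (Fin.cast hCc j) := by
          funext i j
          show _ = u (Fin.cast hCc j) ^ ((Fin.cast hCc i : Fin m) : ℕ)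
          rw [orderEmbOfFin_cast Bᶜ (hBc.trans hCc.symm) hBc j]
          rfl
        rw [show (Matrix.of fun (i j : Fin Cᶜ.card) =>
              z ((Bᶜ.orderEmbOfFin (hBc.trans hCc.symm)) j) ^ (i : ℕ)) = Matrix.of (fun i j =>
                (fun (i' j' : Fin m) => u j' ^ (i' : ℕ)) (Fin.cast hCc i) (Fin.cast hCc j))
              from congrArg Matrix.of e]
        rw [det_fin_cast hCc (fun i' j' => u j' ^ (i' : ℕ)), det_pow_matrix u]
    rw [e1, e2]
    field_simp
    try ring
  rw [Fintype.sum_congr _ _ hterm, ← Finset.mul_sum]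
  have hbij : Function.Bijective (fun C : {C : Finset (Fin n) // C.card = k} =>
      (⟨C.1ᶜ, card_compl_eq h C.2⟩ : {D : Finset (Fin n) // D.card = m})) := by
    constructor
    · rintro ⟨C, hC⟩ ⟨C', hC'⟩ hcc
      simpa [Subtype.ext_iff, compl_inj_iff] using hcc
    · rintro ⟨D, hD⟩
      exact ⟨⟨Dᶜ, card_compl_eq h' hD⟩, by simp⟩
  have hlap : (∑ C : {C : Finset (Fin n) // C.card = k},
      (((Equiv.Perm.sign (shufflePerm (C.1)ᶜ) : ℤ) : F)
        * Matrix.det (Matrix.of fun i j : Fin m =>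
            M ((C.1ᶜ).orderEmbOfFin (card_compl_eq h C.2) i) (Fin.cast h' (Fin.castAdd k j)))
        * Matrix.det (Matrix.of fun i j : Fin k =>
            M (C.1.orderEmbOfFin C.2 i) (Fin.cast h' (Fin.natAdd m j))))) = M.det := by
    rw [laplace h' M]
    refine Fintype.sum_bijective _ hbij _ _ ?_
    rintro ⟨C, hC⟩
    have em : (Matrix.of fun i j : Fin k =>
        M (((Cᶜ)ᶜ).orderEmbOfFin (card_compl_eq h' (card_compl_eq h hC)) i)
          (Fin.cast h' (Fin.natAdd m j)))
        = Matrix.of fun i j : Fin k => M (C.orderEmbOfFin hC i) (Fin.cast h' (Fin.natAdd m j)) := by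
      ext i j
      exact congrArg (fun t => M t (Fin.cast h' (Fin.natAdd m j)))
        (orderEmbOfFin_congr (compl_compl C) _ hC i)
    rw [em]
  rw [hlap]
  by_cases hBB : B' = B
  · rw [if_pos hBB]
    subst hBB
    have hdet : M.det = ((∏ i : Fin m, ∏ j ∈ Finset.Ioi i, (u j - u i)) *
        (∏ i : Fin k, ∏ j ∈ Finset.Ioi i, (w j - w i))) *
        ∏ d : Fin k, ∏ a : Fin m, (w d - u a) := by
      have hM : M.det = (Matrix.of fun (i j : Fin n) => y j ^ (i : ℕ)).det := rfl
      rw [hM, det_pow_matrix y, prod_Ioi_split h' y]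
      simp only [hycc, hynn]
    rw [hdet, inv_mul_cancel_left₀ (mul_ne_zero hPu0 hPw0)]
    rw [← prod_orderEmbOfFin B' hB' (fun i => ∏ j ∈ B'ᶜ, (z i - z j))]
    refine Finset.prod_congr rfl fun d _ => ?_
    rw [← prod_orderEmbOfFin B'ᶜ hBc (fun j => (z (B'.orderEmbOfFin hB' d) - z j))]
  · rw [if_neg hBB]
    have hdet0 : M.det = 0 := by
      have hnsub : ¬ B' ⊆ B := by
        intro hsub
        exact hBB (Finset.eq_of_subset_of_card_le hsub (by omega))
      obtain ⟨x, hx1, hx2⟩ := Finset.not_subset.mp hnsub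
      have hx3 : x ∈ (Bᶜ : Finset (Fin n)) := Finset.mem_compl.mpr hx2
      obtain ⟨a, ha⟩ : ∃ a : Fin k, B'.orderEmbOfFin hB' a = x := by
        have hr : x ∈ Set.range (B'.orderEmbOfFin hB') := by
          rw [Finset.range_orderEmbOfFin]
          exact_mod_cast hx1
        exact hr
      obtain ⟨b, hb⟩ : ∃ b : Fin m, Bᶜ.orderEmbOfFin hBc b = x := by
        have hr : x ∈ Set.range (Bᶜ.orderEmbOfFin hBc) := by
          rw [Finset.range_orderEmbOfFin]
          exact_mod_cast hx3
        exact hr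
      apply Matrix.det_zero_of_column_eq
        (i := Fin.cast h' (Fin.castAdd k b)) (j := Fin.cast h' (Fin.natAdd m a))
      · have hbm := b.isLt
        simp only [ne_eq, Fin.ext_iff, Fin.coe_cast, Fin.coe_castAdd, Fin.coe_natAdd]
        omega
      · intro i
        show y (Fin.cast h' (Fin.castAdd k b)) ^ (i : ℕ) = y (Fin.cast h' (Fin.natAdd m a)) ^ (i : ℕ)
        rw [hycc, hynn]
        show z (Bᶜ.orderEmbOfFin hBc b) ^ (i : ℕ) = z (B'.orderEmbOfFin hB' a) ^ (i : ℕ)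
        rw [hb, ha]
    rw [hdet0, mul_zero]

/-- if `Z_A = Σ_{|B|=k} s_{λ(A)}(z_B) V_B` where `(V_B)_{|B|=k}`
is a (linearly independent) basis family, then
`V_B = (∏_{i∈B,j∉B}(z_i−z_j))⁻¹ Σ_{|C|=k} ε(w_{C̄}) s_{λ(C̄)}(z_{B̄}) Z_C`. -/
theorem inverse_change_of_basis {F : Type*} [Field F] {V : Type*}
    [AddCommGroup V] [Module F V] (n k : ℕ) (hk : k ≤ n)
    (z : Fin n → F) (hz : Function.Injective z)
    (v : Finset (Fin n) → V)
    (hv : LinearIndependent F (fun B : {B : Finset (Fin n) // B.card = k} => v B.1))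
    (Z : Finset (Fin n) → V)
    (hZ : ∀ A : Finset (Fin n), A.card = k →
      Z A = ∑ B ∈ Finset.powersetCard k (Finset.univ : Finset (Fin n)),
        schurAt z A B • v B) :
    ∀ B : Finset (Fin n), B.card = k →
      v B = (∏ i ∈ B, ∏ j ∈ Bᶜ, (z i - z j))⁻¹ •
        ∑ C ∈ Finset.powersetCard k (Finset.univ : Finset (Fin n)),
          (((Equiv.Perm.sign (shufflePerm Cᶜ) : ℤ) : F) * schurAt z Cᶜ Bᶜ) • Z C := by
  intro B hB
  have h : k + (n - k) = n := by omega
  have hP0 : (∏ i ∈ B, ∏ j ∈ Bᶜ, (z i - z j)) ≠ 0 := by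
    rw [Finset.prod_ne_zero_iff]
    intro i hi
    rw [Finset.prod_ne_zero_iff]
    intro j hj
    rw [sub_ne_zero]
    intro e
    exact Finset.mem_compl.mp hj (hz e ▸ hi)
  have e1 : ∀ C ∈ Finset.powersetCard k (Finset.univ : Finset (Fin n)),
      ((((Equiv.Perm.sign (shufflePerm Cᶜ) : ℤ) : F) * schurAt z Cᶜ Bᶜ) • Z C)
      = ∑ B' ∈ Finset.powersetCard k (Finset.univ : Finset (Fin n)),
          ((((Equiv.Perm.sign (shufflePerm Cᶜ) : ℤ) : F) * schurAt z Cᶜ Bᶜ)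
            * schurAt z C B') • v B' := by
    intro C hC
    rw [hZ C (Finset.mem_powersetCard_univ.mp hC), Finset.smul_sum]
    exact Finset.sum_congr rfl fun B' _ => smul_smul _ _ _
  rw [Finset.sum_congr rfl e1, Finset.sum_comm]
  have e2 : ∀ B' ∈ Finset.powersetCard k (Finset.univ : Finset (Fin n)),
      (∑ C ∈ Finset.powersetCard k (Finset.univ : Finset (Fin n)),
        ((((Equiv.Perm.sign (shufflePerm Cᶜ) : ℤ) : F) * schurAt z Cᶜ Bᶜ)
          * schurAt z C B') • v B')
      = (if B' = B then ∏ i ∈ B, ∏ j ∈ Bᶜ, (z i - z j) else 0) • v B' := by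
    intro B' hB'
    rw [← Finset.sum_smul, key h z hz B B' hB (Finset.mem_powersetCard_univ.mp hB')]
  rw [Finset.sum_congr rfl e2]
  simp only [ite_smul, zero_smul]
  rw [Finset.sum_ite_eq' (Finset.powersetCard k (Finset.univ : Finset (Fin n))) B
    (fun B' => (∏ i ∈ B, ∏ j ∈ Bᶜ, (z i - z j)) • v B'),
    if_pos (Finset.mem_powersetCard_univ.mpr hB), smul_smul, inv_mul_cancel₀ hP0, one_smul]
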